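/- In the Grigorchuk group G, for a fixed boundary ray e, the parabolic subgroup P = Stab_G(e) equals the intersection ⋂_{n∈ℕ} P_n, where P_n = Stab_G(e_1...e_n); each P_n has index 2^n in G, and P has infinite index in G. -/

import Mathlib

/-- The rooted automorphism `a` of the binary tree: it flips the first letter. -/
def gaFun : List Bool → List Bool
  | [] => []
  | s :: t => (!s) :: t

mutual
  /-- The generator `b` of the Grigorchuk group: `φ(b) = (a, c)`. -/
  def gbFun : List Bool → List Bool
    | [] => []
    | false :: t => false :: gaFun t
    | true :: t => true :: gcFun t
  /-- The generator `c` of the Grigorchuk group: `φ(c) = (a, d)`. -/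
  def gcFun : List Bool → List Bool
    | [] => []
    | false :: t => false :: gaFun t
    | true :: t => true :: gdFun t
  /-- The generator `d` of the Grigorchuk group: `φ(d) = (1, b)`. -/
  def gdFun : List Bool → List Bool
    | [] => []
    | false :: t => false :: t
    | true :: t => true :: gbFun t
end

theorem gaFun_involutive : Function.Involutive gaFun := by
  intro t
  cases t with
  | nil => rfl
  | cons s r => cases s <;> rfl

theorem gbcd_involutive :
    ∀ t : List Bool, gbFun (gbFun t) = t ∧ gcFun (gcFun t) = t ∧ gdFun (gdFun t) = t := by
  intro t
  induction t with
  | nil => exact ⟨rfl, rfl, rfl⟩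
  | cons s r ih =>
    cases s <;>
      simp [gbFun, gcFun, gdFun, gaFun_involutive r, ih.1, ih.2.1, ih.2.2]

/-- The generator `a` as a tree automorphism. -/
def ga : Equiv.Perm (List Bool) := Function.Involutive.toPerm gaFun gaFun_involutive

/-- The generator `b` as a tree automorphism. -/
def gb : Equiv.Perm (List Bool) := Function.Involutive.toPerm gbFun fun t => (gbcd_involutive t).1

/-- The generator `c` as a tree automorphism. -/
def gc : Equiv.Perm (List Bool) := Function.Involutive.toPerm gcFun fun t => (gbcd_involutive t).2.1

/-- The generator `d` as a tree automorphism. -/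
def gd : Equiv.Perm (List Bool) := Function.Involutive.toPerm gdFun fun t => (gbcd_involutive t).2.2

/-- The Grigorchuk group, as the subgroup of `Aut(T₂)` generated by `a, b, c, d`. -/
def grig : Subgroup (Equiv.Perm (List Bool)) := Subgroup.closure {ga, gb, gc, gd}


/-- The stabilizer in the Grigorchuk group of the vertex `1^n`. -/
def grigP (n : ℕ) : Subgroup grig := MulAction.stabilizer grig (List.replicate n true)

/-- The parabolic subgroup of the Grigorchuk group: the stabilizer of the boundary
ray `e = 1^∞`, i.e. of every vertex `1^n`. -/
def grigParab : Subgroup grig where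
  carrier := {g | ∀ n : ℕ, g • List.replicate n true = List.replicate n true}
  one_mem' := fun n => one_smul _ _
  mul_mem' := fun {a b} ha hb n => by rw [mul_smul, hb n, ha n]
  inv_mem' := fun {a} ha n => by
    calc a⁻¹ • List.replicate n true = a⁻¹ • (a • List.replicate n true) := by rw [ha n]
    _ = List.replicate n true := inv_smul_smul a _

/-!
The group preserves word length, and on the subtree `1T` the elements `a b a, d, b, c`
act as `a, b, c, d`; so every element of `G` is the restriction to `1T` of an element of `G`.
By induction on `n`, `G` is then transitive on the `2^n` words of length `n`, and
orbit–stabilizer gives `[G : P_n] = 2^n`. Since `P ≤ P_n` for all `n`, its index is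
at least every `2^n`, hence infinite (Mathlib records infinite index as `0`).
-/

namespace Subgroup

variable {G : Type*} [Group G]

@[elab_as_elim]
theorem closure_induction_of_forall_inv_eq_self {p : G → Prop} {s : Set G}
    (hs : ∀ x ∈ s, x⁻¹ = x) (mem : ∀ x ∈ s, p x) (one : p 1) (mul : ∀ x y, p x → p y → p (x * y))
    {x : G} (hx : x ∈ closure s) : p x :=
  closure_induction'' (p := fun x _ => p x) mem (fun x hx => (hs x hx).symm ▸ mem x hx) one
    (fun x y _ _ => mul x y) hx

theorem index_eq_zero_of_le_of_unbounded {H : Subgroup G} {K : ℕ → Subgroup G}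
    (hle : ∀ n, H ≤ K n) (hK : ∀ m, ∃ n, m < (K n).index) : H.index = 0 := by
  by_contra h
  have : H.FiniteIndex := ⟨h⟩
  obtain ⟨n, hn⟩ := hK H.index
  exact (index_antitone (hle n)).not_gt hn

end Subgroup

theorem length_gaFun : ∀ t : List Bool, (gaFun t).length = t.length
  | [] => rfl
  | _ :: _ => rfl

mutual
theorem length_gbFun : ∀ t : List Bool, (gbFun t).length = t.length
  | [] => rfl
  | false :: t => by simp [gbFun, length_gaFun]
  | true :: t => by simp [gbFun, length_gcFun t]
theorem length_gcFun : ∀ t : List Bool, (gcFun t).length = t.length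
  | [] => rfl
  | false :: t => by simp [gcFun, length_gaFun]
  | true :: t => by simp [gcFun, length_gdFun t]
theorem length_gdFun : ∀ t : List Bool, (gdFun t).length = t.length
  | [] => rfl
  | false :: _ => rfl
  | true :: t => by simp [gdFun, length_gbFun t]
end

theorem inv_eq_self_of_mem_generators :
    ∀ x ∈ ({ga, gb, gc, gd} : Set (Equiv.Perm (List Bool))), x⁻¹ = x := by
  rintro x (rfl | rfl | rfl | rfl) <;> rfl

theorem ga_mem_grig : ga ∈ grig := Subgroup.subset_closure (by simp)

theorem gb_mem_grig : gb ∈ grig := Subgroup.subset_closure (by simp)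

theorem gc_mem_grig : gc ∈ grig := Subgroup.subset_closure (by simp)

theorem gd_mem_grig : gd ∈ grig := Subgroup.subset_closure (by simp)

theorem length_apply_of_mem_grig {g : Equiv.Perm (List Bool)} (hg : g ∈ grig) (l : List Bool) :
    (g l).length = l.length := by
  revert l
  refine Subgroup.closure_induction_of_forall_inv_eq_self inv_eq_self_of_mem_generators
    ?_ (fun _ => rfl) (fun x y hx hy l => by rw [Equiv.Perm.mul_apply, hx, hy]) hg
  rintro x (rfl | rfl | rfl | rfl)
  exacts [length_gaFun, length_gbFun, length_gcFun, length_gdFun]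

theorem exists_mem_grig_apply_true_cons {g : Equiv.Perm (List Bool)} (hg : g ∈ grig) :
    ∃ h ∈ grig, ∀ t : List Bool, h (true :: t) = true :: g t := by
  refine Subgroup.closure_induction_of_forall_inv_eq_self inv_eq_self_of_mem_generators
    ?_ ⟨1, one_mem grig, fun t => rfl⟩ ?_ hg
  · rintro x (rfl | rfl | rfl | rfl)
    · exact ⟨ga * gb * ga, mul_mem (mul_mem ga_mem_grig gb_mem_grig) ga_mem_grig,
        fun t => rfl⟩
    · exact ⟨gd, gd_mem_grig, fun t => rfl⟩
    · exact ⟨gb, gb_mem_grig, fun t => rfl⟩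
    · exact ⟨gc, gc_mem_grig, fun t => rfl⟩
  · rintro x y ⟨u, hu, hux⟩ ⟨v, hv, hvy⟩
    exact ⟨u * v, mul_mem hu hv, fun t => by simp only [Equiv.Perm.mul_apply, hvy, hux]⟩

theorem exists_mem_grig_apply_replicate_true :
    ∀ l : List Bool, ∃ g ∈ grig, g (List.replicate l.length true) = l
  | [] => ⟨1, one_mem grig, rfl⟩
  | s :: t => by
    obtain ⟨g, hg, hgt⟩ := exists_mem_grig_apply_replicate_true t
    obtain ⟨h, hh, hht⟩ := exists_mem_grig_apply_true_cons hg
    have hh_replicate : h (List.replicate (s :: t).length true) = true :: t := by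
      rw [List.length_cons, List.replicate_succ, hht, hgt]
    cases s
    · exact ⟨ga * h, mul_mem ga_mem_grig hh, by rw [Equiv.Perm.mul_apply, hh_replicate]; rfl⟩
    · exact ⟨h, hh, hh_replicate⟩

theorem orbit_replicate_true (n : ℕ) :
    MulAction.orbit grig (List.replicate n true) = {l : List Bool | l.length = n} := by
  ext l
  constructor
  · rintro ⟨⟨g, hg⟩, rfl⟩
    exact (length_apply_of_mem_grig hg _).trans List.length_replicate
  · rintro rfl
    obtain ⟨g, hg, hgl⟩ := exists_mem_grig_apply_replicate_true l
    exact ⟨⟨g, hg⟩, hgl⟩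

theorem index_grigP (n : ℕ) : (grigP n).index = 2 ^ n := by
  rw [grigP, MulAction.index_stabilizer, orbit_replicate_true, ← Nat.card_coe_set_eq]
  change Nat.card (List.Vector Bool n) = 2 ^ n
  rw [Nat.card_eq_fintype_card, card_vector, Fintype.card_bool]

theorem grigParab_eq_iInf_grigP : grigParab = ⨅ n : ℕ, grigP n := by
  ext g
  simp only [Subgroup.mem_iInf]
  rfl

/-- In the Grigorchuk group `G`, the parabolic subgroup `P = Stab_G(1^∞)` is the
intersection of the vertex stabilizers `P_n = Stab_G(1^n)`; each `P_n` has index `2^n`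
in `G`, and `P` has infinite index in `G`. -/
theorem grigorchuk_parabolic_subgroup :
    grigParab = (⨅ n : ℕ, grigP n) ∧
      (∀ n : ℕ, (grigP n).index = 2 ^ n) ∧
      grigParab.index = 0 := by
  refine ⟨grigParab_eq_iInf_grigP, index_grigP, ?_⟩
  refine Subgroup.index_eq_zero_of_le_of_unbounded (K := grigP) (fun n => ?_) fun m => ?_
  · exact grigParab_eq_iInf_grigP ▸ iInf_le grigP n
  · exact ⟨m, (index_grigP m).symm ▸ Nat.lt_two_pow_self⟩
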